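/- Fix d ≥ 2, arbitrary labels y_2,…,y_d ∈ {1,-1}, the test set Z_test = {(e_1,1)}, the training family Z_train = {(e_i, y_i) : i = 2,…,d} ∪ {(e_1,1), (-e_1,1)} of size n = d+1, and the sample z_bar = (-e_1,1). Then for every θ ∈ ℝ^d, the influence of z_bar satisfies I_θ(z_bar, Z_test) = (d+1)/2; in particular I_θ(z_bar, Z_test) > 0 for every θ ∈ ℝ^d, and this influence value is independent of θ. -/

import Mathlib

open Matrix
noncomputable section

/-- The sigmoid function `σ(t) = 1/(1+exp(-t))`. -/
def sigmoid (t : ℝ) : ℝ := 1 / (1 + Real.exp (-t))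

/-- A labeled sample `(x, y)` with `x ∈ ℝ^d` and label `y ∈ ℝ` (intended `y ∈ {1,-1}`). -/
abbrev Sample (d : ℕ) := (Fin d → ℝ) × ℝ

/-- Gradient in `θ` of the logistic loss `L((x,y),θ) = log(1+exp(-y⟨x,θ⟩))`,
namely `-y·σ(-y⟨x,θ⟩)·x`. -/
def lossGrad {d : ℕ} (z : Sample d) (θ : Fin d → ℝ) : Fin d → ℝ :=
  (-z.2 * sigmoid (-(z.2 * (z.1 ⬝ᵥ θ)))) • z.1

/-- Empirical-loss Hessian `H_θ = (1/n)·Σ_i σ(⟨x_i,θ⟩)σ(-⟨x_i,θ⟩)·x_i x_iᵀ`. -/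
def hess {d n : ℕ} (Ztrain : Fin n → Sample d) (θ : Fin d → ℝ) : Matrix (Fin d) (Fin d) ℝ :=
  (n : ℝ)⁻¹ • ∑ i, (sigmoid ((Ztrain i).1 ⬝ᵥ θ) * sigmoid (-((Ztrain i).1 ⬝ᵥ θ))) •
    vecMulVec (Ztrain i).1 (Ztrain i).1

/-- Influence of a training sample `z` on a test set `Ztest`:
`I_θ(z, Ztest) = Σ_j -g_{ztest_j}(θ)ᵀ H_θ⁻¹ g_z(θ)`. -/
def influence {d n m : ℕ} (Ztrain : Fin n → Sample d) (θ : Fin d → ℝ)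
    (z : Sample d) (Ztest : Fin m → Sample d) : ℝ :=
  ∑ j, -(lossGrad (Ztest j) θ ⬝ᵥ ((hess Ztrain θ)⁻¹ *ᵥ lossGrad z θ))


/-- The concrete training family of size `d+1`: index `0` is the target `(e_1, 1)`,
indices `1,...,d-1` are `(e_i, y_i)`, and index `d` is `(-e_1, 1)`. -/
def trainFam (d : ℕ) (hd : 0 < d) (y : Fin d → ℝ) (i : Fin (d + 1)) : Sample d :=
  if h : (i : ℕ) < d then
    if _h0 : (i : ℕ) = 0 then (Pi.single (⟨0, hd⟩ : Fin d) 1, 1)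
    else (Pi.single (⟨(i : ℕ), h⟩ : Fin d) 1, y ⟨(i : ℕ), h⟩)
  else (-Pi.single (⟨0, hd⟩ : Fin d) 1, 1)

/-- The concrete test set `Z_test = {(e_1, 1)}`. -/
def testFam (d : ℕ) (hd : 0 < d) : Fin 1 → Sample d :=
  fun _ => (Pi.single (⟨0, hd⟩ : Fin d) 1, 1)

/-!
Every feature is `±eᵢ`, so `H_θ` is diagonal with `(j, j)` entry `(d+1)⁻¹ · #{samples along e_j} ·
σ(θ_j)σ(-θ_j)`, and both gradients involved are multiples of `e₁`: `g_{z_test} = -σ(-θ₁)·e₁` and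
`g_{z̄} = σ(θ₁)·e₁`. Two samples lie along `e₁`, so the influence is
`σ(-θ₁)σ(θ₁) / ((d+1)⁻¹ · 2 σ(θ₁)σ(-θ₁)) = (d+1)/2`: the sigmoid factors cancel.
-/

open Finset

lemma sigmoid_pos (t : ℝ) : 0 < sigmoid t := by
  unfold sigmoid; positivity

lemma vecMulVec_single_one_self {ι α : Type*} [DecidableEq ι] [MulZeroOneClass α] (k : ι) :
    vecMulVec (Pi.single k (1 : α)) (Pi.single k 1) = diagonal (Pi.single k 1) := by
  rw [← single_eq_single_vecMulVec_single, diagonal_single]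

lemma inv_diagonal_of_ne_zero {ι K : Type*} [Fintype ι] [DecidableEq ι] [Field K] {w : ι → K}
    (hw : ∀ j, w j ≠ 0) : (diagonal w)⁻¹ = diagonal fun j => (w j)⁻¹ := by
  refine inv_eq_right_inv ?_
  rw [diagonal_mul_diagonal, ← diagonal_one]
  exact congrArg _ (funext fun j => mul_inv_cancel₀ (hw j))

lemma lossGrad_single_one {d : ℕ} (j : Fin d) (θ : Fin d → ℝ) :
    lossGrad (Pi.single j 1, 1) θ = (-sigmoid (-θ j)) • Pi.single j 1 := by
  simp [lossGrad, single_dotProduct]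

lemma lossGrad_neg_single_one {d : ℕ} (j : Fin d) (θ : Fin d → ℝ) :
    lossGrad (-Pi.single j 1, 1) θ = sigmoid (θ j) • Pi.single j 1 := by
  simp [lossGrad, single_dotProduct]

lemma sum_diagonal_single {ι κ R : Type*} [Fintype ι] [DecidableEq κ] [Semiring R]
    (k : ι → κ) (c : κ → R) :
    ∑ i, diagonal (Pi.single (k i) (c (k i))) = diagonal fun j => (#{i | k i = j} : R) * c j := by
  ext a b
  rcases eq_or_ne a b with rfl | hab
  · simp only [Matrix.sum_apply, diagonal_apply_eq, Pi.single_apply, natCast_card_filter,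
      Finset.sum_mul, ite_mul, one_mul, zero_mul]
    exact Finset.sum_congr rfl fun i _ => by by_cases h : k i = a <;> simp [h, Ne.symm]
  · simp [Matrix.sum_apply, hab]

theorem hess_eq_diagonal_of_fst_eq_single {d n : ℕ} (Z : Fin n → Sample d) (k : Fin n → Fin d)
    (hZ : ∀ i, (Z i).1 = Pi.single (k i) 1 ∨ (Z i).1 = -Pi.single (k i) 1) (θ : Fin d → ℝ) :
    hess Z θ = diagonal fun j =>
      (n : ℝ)⁻¹ * #{i | k i = j} * (sigmoid (θ j) * sigmoid (-θ j)) := by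
  -- `σ(t)σ(-t)` is even, so the sign of a feature does not matter.
  have hterm : ∀ i, (sigmoid ((Z i).1 ⬝ᵥ θ) * sigmoid (-((Z i).1 ⬝ᵥ θ))) •
      vecMulVec (Z i).1 (Z i).1 =
      diagonal (Pi.single (k i) (sigmoid (θ (k i)) * sigmoid (-θ (k i)))) := by
    intro i
    rcases hZ i with h | h <;>
      simp [h, single_dotProduct, vecMulVec_single_one_self, mul_comm, ← diagonal_smul,
        Pi.single_apply]
  rw [hess, Finset.sum_congr rfl fun i _ => hterm i,
    sum_diagonal_single k fun j => sigmoid (θ j) * sigmoid (-θ j), ← diagonal_smul]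
  exact congrArg diagonal (funext fun j => (mul_assoc _ _ _).symm)

theorem influence_eq_of_hess_eq_diagonal {d n : ℕ} (Z : Fin n → Sample d) (θ : Fin d → ℝ)
    (z zt : Sample d) {w : Fin d → ℝ} (hH : hess Z θ = diagonal w) (hw : ∀ j, w j ≠ 0)
    {j : Fin d} {a b : ℝ} (ha : lossGrad zt θ = a • Pi.single j 1)
    (hb : lossGrad z θ = b • Pi.single j 1) :
    influence Z θ z (fun _ : Fin 1 => zt) = -(a * b) / w j := by
  rw [influence, Fin.sum_univ_one, hH, inv_diagonal_of_ne_zero hw, ha, hb, mulVec_smul,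
    diagonal_mulVec_single, smul_dotProduct, dotProduct_smul, single_dotProduct]
  simp [div_eq_mul_inv, mul_assoc]

def trainBasisIndex (d : ℕ) (hd : 0 < d) (i : Fin (d + 1)) : Fin d :=
  if h : (i : ℕ) < d then ⟨i, h⟩ else ⟨0, hd⟩

lemma trainFam_fst (d : ℕ) (hd : 0 < d) (y : Fin d → ℝ) (i : Fin (d + 1)) :
    (trainFam d hd y i).1 = Pi.single (trainBasisIndex d hd i) 1 ∨
      (trainFam d hd y i).1 = -Pi.single (trainBasisIndex d hd i) 1 := by
  unfold trainFam trainBasisIndex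
  split_ifs with h h0
  · left; simp only [h0]
  · left; rfl
  · right; rfl

lemma card_filter_trainBasisIndex_eq (d : ℕ) (hd : 0 < d) (j : Fin d) :
    #{i | trainBasisIndex d hd i = j} = if j = ⟨0, hd⟩ then 2 else 1 := by
  rw [card_filter, Fin.sum_univ_castSucc]
  simp only [trainBasisIndex, Fin.val_castSucc, Fin.is_lt, ↓reduceDIte, Fin.eta, sum_ite_eq', mem_univ,
    ↓reduceIte, Fin.val_last, lt_self_iff_false]
  split_ifs <;> simp_all [eq_comm]

lemma trainFam_last (d : ℕ) (hd : 0 < d) (y : Fin d → ℝ) :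
    trainFam d hd y (Fin.last d) = (-Pi.single (⟨0, hd⟩ : Fin d) 1, 1) := by
  simp [trainFam]

lemma hess_trainFam (d : ℕ) (hd : 0 < d) (y θ : Fin d → ℝ) :
    hess (trainFam d hd y) θ = diagonal fun j =>
      ((d : ℝ) + 1)⁻¹ * (if j = ⟨0, hd⟩ then 2 else 1) * (sigmoid (θ j) * sigmoid (-θ j)) := by
  rw [hess_eq_diagonal_of_fst_eq_single _ _ (trainFam_fst d hd y)]
  simp only [card_filter_trainBasisIndex_eq]
  push_cast
  rfl

/-- for every `θ`, the influence of the sample `z_bar = (-e_1, 1)`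
(on the test set `{(e_1,1)}`) equals `(d+1)/2`, a positive constant independent of `θ`. -/
theorem influence_bar_eq_pos (d : ℕ) (hd : 2 ≤ d) (y : Fin d → ℝ) (θ : Fin d → ℝ) :
    influence (trainFam d (by omega) y) θ (trainFam d (by omega) y (Fin.last d))
        (testFam d (by omega)) = ((d : ℝ) + 1) / 2 ∧
    0 < influence (trainFam d (by omega) y) θ (trainFam d (by omega) y (Fin.last d))
        (testFam d (by omega)) := by
  have hd₀ : 0 < d := by omega
  have hw (j : Fin d) : ((d : ℝ) + 1)⁻¹ * (if j = ⟨0, hd₀⟩ then 2 else 1) *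
      (sigmoid (θ j) * sigmoid (-θ j)) ≠ 0 := by
    have := sigmoid_pos (θ j)
    have := sigmoid_pos (-θ j)
    split_ifs <;> positivity
  have key : influence (trainFam d hd₀ y) θ (trainFam d hd₀ y (Fin.last d)) (testFam d hd₀) =
      ((d : ℝ) + 1) / 2 := by
    unfold testFam
    rw [influence_eq_of_hess_eq_diagonal _ _ _ _ (hess_trainFam d hd₀ y θ) hw
      (lossGrad_single_one _ θ) (by rw [trainFam_last]; exact lossGrad_neg_single_one _ θ)]
    have := (sigmoid_pos (θ ⟨0, hd₀⟩)).ne'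
    have := (sigmoid_pos (-θ ⟨0, hd₀⟩)).ne'
    simp only [if_true]
    field_simp
  exact ⟨key, key ▸ by positivity⟩
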